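/- If X is a k-connected multigraph with k ≥ 2, then every complete generalized truncation of X is k-connected. -/

import Mathlib

/-- A multigraph (possibly with loops and multiple edges): a vertex type,
an edge type, and an incidence map assigning to each edge its unordered pair of ends. -/
structure Multigraph where
  V : Type
  E : Type
  ends : E → Sym2 V

namespace Multigraph

/-- Two vertices are adjacent if some edge joins them. -/
def Adj (X : Multigraph) (u v : X.V) : Prop := ∃ e, X.ends e = s(u, v)

/-- Reachability by walks. -/
def Reachable (X : Multigraph) : X.V → X.V → Prop := Relation.ReflTransGen X.Adj

/-- A multigraph is connected if every vertex reaches every other. -/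
def Connected (X : Multigraph) : Prop := ∀ u v, X.Reachable u v

/-- No loops. -/
def Loopless (X : Multigraph) : Prop := ∀ e, ¬ (X.ends e).IsDiag

/-- Delete a set of edges. -/
def deleteEdges (X : Multigraph) (S : Set X.E) : Multigraph :=
  ⟨X.V, {e // e ∉ S}, fun e => X.ends e.1⟩

/-- A multigraph is a simple graph: no loops and no two parallel edges. -/
def IsSimple (X : Multigraph) : Prop :=
  X.Loopless ∧ ∀ e f, X.ends e = X.ends f → e = f

/-- A perfect matching: a set of non-loop edges such that every vertex is
incident with exactly one edge of the set. -/
def IsPerfectMatching (X : Multigraph) (M : Set X.E) : Prop :=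
  (∀ e ∈ M, ¬ (X.ends e).IsDiag) ∧ ∀ v : X.V, ∃! e, e ∈ M ∧ v ∈ X.ends e

/-- The valency of a vertex (loops would count once here; used for loopless graphs). -/
noncomputable def degree (X : Multigraph) (v : X.V) : ℕ∞ := {e | v ∈ X.ends e}.encard

/-- Data realizing `Y` as a generalized truncation of `X`:
`label` sends each vertex of `Y` to the vertex of `X` whose cluster contains it,
`emb` sends each edge of `X` to the corresponding matching edge of `F(M)` in `Y`;
the matching edges form a perfect matching whose ends are labelled by the ends of the
original edge, all remaining (constituent) edges lie inside a single cluster, and the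
constituents form a simple graph. -/
structure TruncationData (X Y : Multigraph) where
  label : Y.V → X.V
  emb : X.E → Y.E
  emb_inj : Function.Injective emb
  label_surj : Function.Surjective label
  ends_map : ∀ e, (Y.ends (emb e)).map label = X.ends e
  emb_ne : ∀ e, ¬ (Y.ends (emb e)).IsDiag
  matching : ∀ v : Y.V, ∃! e : X.E, v ∈ Y.ends (emb e)
  cluster : ∀ f : Y.E, f ∉ Set.range emb → ((Y.ends f).map label).IsDiag
  simple : (Y.deleteEdges (Set.range emb)).IsSimple

/-- `Y` is a generalized truncation of `X`. -/
def IsGenTruncation (X Y : Multigraph) : Prop := Nonempty (X.TruncationData Y)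

/-- Isomorphism of multigraphs. -/
structure Iso (X Y : Multigraph) where
  vEquiv : X.V ≃ Y.V
  eEquiv : X.E ≃ Y.E
  ends_map : ∀ e, (X.ends e).map vEquiv = Y.ends (eEquiv e)

/-- A truncation is complete if every constituent is a complete graph. -/
def TruncationData.Complete {X Y : Multigraph} (T : TruncationData X Y) : Prop :=
  ∀ x y : Y.V, x ≠ y → T.label x = T.label y →
    ∃ f, f ∉ Set.range T.emb ∧ Y.ends f = s(x, y)

/-- A truncation is cohesive if every constituent is connected. -/
def TruncationData.Cohesive {X Y : Multigraph} (T : TruncationData X Y) : Prop :=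
  ∀ v : X.V, ∀ x y : Y.V, T.label x = v → T.label y = v →
    Relation.ReflTransGen
      (fun a b => T.label a = v ∧ T.label b = v ∧
        ∃ f, f ∉ Set.range T.emb ∧ Y.ends f = s(a, b)) x y

/-- Walks in a multigraph, recording the edges used. -/
inductive Walk (X : Multigraph) : X.V → X.V → Type
  | nil (v : X.V) : Walk X v v
  | cons {u v w : X.V} (e : X.E) (h : X.ends e = s(u, v)) (p : Walk X v w) : Walk X u w

/-- The list of edges of a walk. -/
def Walk.edges {X : Multigraph} : ∀ {u v : X.V}, X.Walk u v → List X.E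
  | _, _, .nil _ => []
  | _, _, .cons e _ p => e :: p.edges

/-- The list of vertices of a walk (in order, with repetitions). -/
def Walk.support {X : Multigraph} : ∀ {u v : X.V}, X.Walk u v → List X.V
  | u, _, .nil _ => [u]
  | u, _, .cons _ _ p => u :: p.support

end Multigraph

namespace Multigraph

/-- Reachability avoiding a set `S` of vertices. -/
def ReachableOutside (X : Multigraph) (S : Set X.V) (u v : X.V) : Prop :=
  Relation.ReflTransGen (fun a b => a ∉ S ∧ b ∉ S ∧ X.Adj a b) u v

/-- A multigraph is `k`-connected if it has more than `k` vertices and remains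
connected after deletion of any fewer than `k` vertices. -/
def VertexConnectedGE (X : Multigraph) (k : ℕ) : Prop :=
  (k : ℕ∞) < (Set.univ : Set X.V).encard ∧
    ∀ S : Set X.V, S.encard < (k : ℕ∞) →
      ∀ u v : X.V, u ∉ S → v ∉ S → X.ReachableOutside S u v

end Multigraph

/-!
Let `S` be a set of fewer than `k` vertices of `Y`. The cluster of any vertex `x` of `X` is matched
to the clusters of its at least `k` neighbours, and `S` can block at most `|S|` of these, so every
vertex of `Y` outside `S` reaches, inside its complete cluster and across one matching edge, a
cluster disjoint from `S`. Any two such clusters are joined by a path of `X` avoiding the fewer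
than `k` labels of `S`, and this path lifts to `Y` through complete clusters and matching edges.
-/

theorem Relation.ReflTransGen.exists_rel_of_mem_of_notMem {α : Type*} {r : α → α → Prop}
    {s : Set α} {a b : α} (h : Relation.ReflTransGen r a b) (ha : a ∈ s) (hb : b ∉ s) :
    ∃ c ∈ s, ∃ d ∉ s, r c d := by
  induction h with
  | refl => exact absurd ha hb
  | @tail c d _ hcd ih =>
    by_cases hc : c ∈ s
    · exact ⟨c, hc, d, hb, hcd⟩
    · exact ih hc

namespace Multigraph

variable {X Y : Multigraph}

theorem Adj.symm {u v : X.V} (h : X.Adj u v) : X.Adj v u :=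
  let ⟨e, he⟩ := h
  ⟨e, he.trans Sym2.eq_swap⟩

theorem ReachableOutside.symm {S : Set X.V} {u v : X.V} (h : X.ReachableOutside S u v) :
    X.ReachableOutside S v u :=
  Relation.reflTransGen_swap.mp <|
    Relation.ReflTransGen.mono (fun _ _ hab => ⟨hab.2.1, hab.1, hab.2.2.symm⟩) _ _ h

theorem VertexConnectedGE.le_encard_neighbors {k : ℕ} (hXk : X.VertexConnectedGE k) (x : X.V) :
    (k : ℕ∞) ≤ {w | w ≠ x ∧ X.Adj x w}.encard := by
  set N := {w | w ≠ x ∧ X.Adj x w}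
  by_contra! hN
  have hsmall : (insert x N).encard < (Set.univ : Set X.V).encard :=
    calc (insert x N).encard ≤ N.encard + 1 := Set.encard_insert_le _ _
      _ ≤ k := ENat.add_one_le_natCast_iff.mpr hN
      _ < _ := hXk.1
  obtain ⟨v, hv⟩ := (Set.ne_univ_iff_exists_notMem _).mp fun h => (h ▸ hsmall).false
  rw [Set.mem_insert_iff, not_or] at hv
  -- A walk from `x` to `v` avoiding `N` must leave `x` through a neighbour, which lies in `N`.
  obtain ⟨c, rfl, d, hdx, -, hdN, hcd⟩ :=
    (hXk.2 N hN x v (fun h => h.1 rfl) hv.2).exists_rel_of_mem_of_notMem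
      (Set.mem_singleton x) hv.1
  exact hdN ⟨hdx, hcd⟩

namespace TruncationData

variable (T : TruncationData X Y)

theorem exists_ends_emb_eq {e : X.E} {x w : X.V} (h : X.ends e = s(x, w)) :
    ∃ p q, Y.ends (T.emb e) = s(p, q) ∧ T.label p = x ∧ T.label q = w := by
  induction hY : Y.ends (T.emb e) using Sym2.ind with
  | h p q =>
    have hmap := T.ends_map e
    rw [hY, Sym2.map_mk, h, Sym2.eq_iff] at hmap
    rcases hmap with ⟨hp, hq⟩ | ⟨hq, hp⟩
    · exact ⟨p, q, rfl, hp, hq⟩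
    · exact ⟨q, p, Sym2.eq_swap, hp, hq⟩

theorem eq_of_mem_ends_emb {p : Y.V} {e e' : X.E} (he : p ∈ Y.ends (T.emb e))
    (he' : p ∈ Y.ends (T.emb e')) : e = e' :=
  (T.matching p).unique he he'

-- Choose for each neighbour `w` of `x` a port `p w` in the cluster of `x` matched into the
-- cluster of `w`; `S` blocks `w` only at `p w ∈ S ∩ cl x` (injectively) or at
-- `w ∈ label '' (S \ cl x)`.
theorem exists_port_unblocked {k : ℕ} (hXk : X.VertexConnectedGE k) {S : Set Y.V}
    (hS : S.encard < k) (x : X.V) :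
    ∃ e p q, Y.ends (T.emb e) = s(p, q) ∧ T.label p = x ∧ p ∉ S ∧
      T.label q ∉ T.label '' S := by
  set N := {w | w ≠ x ∧ X.Adj x w}
  have hlift : ∀ w, ∃ p q : Y.V, w ∈ N → ∃ e, X.ends e = s(x, w) ∧
      Y.ends (T.emb e) = s(p, q) ∧ T.label p = x ∧ T.label q = w := by
    intro w
    by_cases hw : w ∈ N
    · obtain ⟨e, he⟩ := hw.2
      obtain ⟨p, q, hpq, hp, hq⟩ := T.exists_ends_emb_eq he
      exact ⟨p, q, fun _ => ⟨e, he, hpq, hp, hq⟩⟩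
    · obtain ⟨v, rfl⟩ := T.label_surj w
      exact ⟨v, v, fun h => absurd h hw⟩
  choose p q hpq using hlift
  have hp : ∀ w ∈ N, T.label (p w) = x := fun w hw => (hpq w hw).choose_spec.2.2.1
  have hinj : Set.InjOn p N := by
    intro w hw w' hw' hpp
    obtain ⟨e, he, hpe, -⟩ := hpq w hw
    obtain ⟨e', he', hpe', -⟩ := hpq w' hw'
    have hee' : e = e' := T.eq_of_mem_ends_emb (hpe ▸ Sym2.mem_mk_left _ _)
      (hpp ▸ hpe' ▸ Sym2.mem_mk_left _ _)
    rw [← Sym2.congr_right (a := x), ← he, ← he', hee']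
  obtain ⟨w, hwN, hpw, hw⟩ : ∃ w ∈ N, p w ∉ S ∧ w ∉ T.label '' S := by
    by_contra! hblocked
    set cl := T.label ⁻¹' {x}
    have hfar : N ∩ T.label '' S ⊆ T.label '' (S \ cl) := by
      rintro _ ⟨hw, s, hs, rfl⟩
      exact ⟨s, ⟨hs, hw.1⟩, rfl⟩
    have hport : Set.MapsTo p (N \ T.label '' S) (S ∩ cl) := fun w hw =>
      ⟨not_not.mp fun h => hw.2 (hblocked w hw.1 h), hp w hw.1⟩
    have : N.encard ≤ S.encard :=
      calc N.encard = (N \ T.label '' S).encard + (N ∩ T.label '' S).encard :=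
            (Set.encard_sdiff_add_encard_inter _ _).symm
        _ ≤ (S ∩ cl).encard + (S \ cl).encard :=
            add_le_add (Set.encard_le_encard_of_injOn hport (hinj.mono Set.sdiff_subset))
              ((Set.encard_le_encard hfar).trans (Set.encard_image_le _ _))
        _ = S.encard := by rw [add_comm, Set.encard_sdiff_add_encard_inter]
    exact (hS.trans_le (hXk.le_encard_neighbors x)).not_ge this
  obtain ⟨e, -, hpqe, hpx, hq⟩ := hpq w hwN
  exact ⟨e, p w, q w, hpqe, hpx, hpw, by rwa [hq]⟩

variable {T}

theorem Complete.reachableOutside (hcomp : T.Complete) {S : Set Y.V} {a b : Y.V}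
    (hab : T.label a = T.label b) (ha : a ∉ S) (hb : b ∉ S) : Y.ReachableOutside S a b := by
  obtain rfl | hne := eq_or_ne a b
  · exact .refl
  · obtain ⟨f, -, hf⟩ := hcomp a b hne hab
    exact .single ⟨ha, hb, f, hf⟩

theorem Complete.reachableOutside_of_image (hcomp : T.Complete) {S : Set Y.V} {x y : X.V}
    (hxy : X.ReachableOutside (T.label '' S) x y) (hx : x ∉ T.label '' S)
    (hy : y ∉ T.label '' S) {a b : Y.V} (ha : T.label a = x) (hb : T.label b = y) :
    Y.ReachableOutside S a b := by
  have hS : ∀ {p}, T.label p ∉ T.label '' S → p ∉ S := fun hp h => hp ⟨_, h, rfl⟩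
  induction hxy using Relation.ReflTransGen.head_induction_on generalizing a with
  | refl => exact hcomp.reachableOutside (ha.trans hb.symm) (hS (ha ▸ hx)) (hS (hb ▸ hy))
  | head hstep _ ih =>
    obtain ⟨-, hc, e, he⟩ := hstep
    obtain ⟨p, q, hpq, rfl, rfl⟩ := T.exists_ends_emb_eq he
    exact (hcomp.reachableOutside ha (hS (ha ▸ hx)) (hS hx)).trans <|
      .head ⟨hS hx, hS hc, T.emb e, hpq⟩ (ih hc rfl)

theorem Complete.exists_reachableOutside_unblocked (hcomp : T.Complete) {k : ℕ}
    (hXk : X.VertexConnectedGE k) {S : Set Y.V} (hS : S.encard < k) {u : Y.V} (hu : u ∉ S) :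
    ∃ q, T.label q ∉ T.label '' S ∧ Y.ReachableOutside S u q := by
  obtain ⟨e, p, q, hpq, hp, hpS, hq⟩ := T.exists_port_unblocked hXk hS (T.label u)
  have hqS : q ∉ S := fun h => hq ⟨q, h, rfl⟩
  exact ⟨q, hq,
    (hcomp.reachableOutside hp.symm hu hpS).trans (.single ⟨hpS, hqS, T.emb e, hpq⟩)⟩

end TruncationData

end Multigraph

open Multigraph in
theorem complete_truncation_connected_general (X Y : Multigraph)
    (k : ℕ) (hXk : X.VertexConnectedGE k)
    (T : TruncationData X Y) (hcomp : T.Complete) :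
    Y.VertexConnectedGE k := by
  refine ⟨hXk.1.trans_le ?_, fun S hS u v hu hv => ?_⟩
  · rw [← Set.image_univ_of_surjective T.label_surj]
    exact Set.encard_image_le _ _
  · obtain ⟨a, ha, hua⟩ := hcomp.exists_reachableOutside_unblocked hXk hS hu
    obtain ⟨b, hb, hvb⟩ := hcomp.exists_reachableOutside_unblocked hXk hS hv
    have hab := hXk.2 _ ((Set.encard_image_le _ _).trans_lt hS) _ _ ha hb
    exact hua.trans ((hcomp.reachableOutside_of_image hab ha hb rfl rfl).trans hvb.symm)

open Multigraph in
/-- If `X` is a `k`-connected multigraph with `k ≥ 2`, then every complete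
generalized truncation of `X` is `k`-connected. -/
theorem complete_truncation_connected (X Y : Multigraph) (hX : X.Loopless)
    (k : ℕ) (hk : 2 ≤ k) (hXk : X.VertexConnectedGE k)
    (T : TruncationData X Y) (hcomp : T.Complete) :
    Y.VertexConnectedGE k :=
  complete_truncation_connected_general X Y k hXk T hcomp
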